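/- For j ≠ i, assuming the Schlesinger equations hold, the mixed partial derivatives agree: ∂/∂t_j (−Σ_{k≠i} [Q_k, Q_i]/(t_i − t_k)) = ∂/∂t_i ([Q_i, Q_j]/(t_i − t_j)), where all appearing first derivatives of the Q's are replaced by the right-hand sides of the Schlesinger system. The verification reduces to the Jacobi identity [A,[B,C]] + [B,[C,A]] + [C,[A,B]] = 0 for matrices. -/

import Mathlib

open Function

attribute [local instance]
  Matrix.linftyOpNormedRing Matrix.linftyOpNormedAlgebra

private lemma schlesinger_algebra {n k : ℕ} (a : Fin n → ℂ)
    (A : Fin n → Matrix (Fin k) (Fin k) ℂ) (i j : Fin n) (hij : j ≠ i)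
    (hd : ∀ p q : Fin n, p ≠ q → a p ≠ a q) :
    -∑ l ∈ Finset.univ.erase i,
        ((a i - a l)⁻¹ •
            ((((a i - a j)⁻¹ • (A i * A j - A j * A i)) * A l
                + A i * (if l = j then
                    -∑ m ∈ Finset.univ.erase j,
                      (a j - a m)⁻¹ • (A j * A m - A m * A j)
                  else (a l - a j)⁻¹ • (A l * A j - A j * A l)))
              - ((if l = j then
                    -∑ m ∈ Finset.univ.erase j,
                      (a j - a m)⁻¹ • (A j * A m - A m * A j)
                  else (a l - a j)⁻¹ • (A l * A j - A j * A l)) * A i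
                + A l * ((a i - a j)⁻¹ • (A i * A j - A j * A i))))
          + (if l = j then 1 / (a i - a j) ^ 2 else 0) • (A i * A l - A l * A i))
      = (a i - a j)⁻¹ •
          (((-∑ m ∈ Finset.univ.erase i,
                (a i - a m)⁻¹ • (A i * A m - A m * A i)) * A j
              + A i * ((a j - a i)⁻¹ • (A j * A i - A i * A j)))
            - (((a j - a i)⁻¹ • (A j * A i - A i * A j)) * A i
              + A j * (-∑ m ∈ Finset.univ.erase i,
                  (a i - a m)⁻¹ • (A i * A m - A m * A i))))
        + (-1 / (a i - a j) ^ 2) • (A i * A j - A j * A i) := by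
  have hiji : i ≠ j := Ne.symm hij
  have hdij : a i - a j ≠ 0 := sub_ne_zero.mpr (hd i j hiji)
  have hdji : a j - a i ≠ 0 := sub_ne_zero.mpr (hd j i hij)
  have hjmem : j ∈ Finset.univ.erase i := Finset.mem_erase.mpr ⟨hij, Finset.mem_univ j⟩
  have himem : i ∈ Finset.univ.erase j := Finset.mem_erase.mpr ⟨hiji, Finset.mem_univ i⟩
  have hpoint : ∀ l ∈ (Finset.univ.erase i).erase j,
      ((a i - a l)⁻¹ •
            ((((a i - a j)⁻¹ • (A i * A j - A j * A i)) * A l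
                + A i * (if l = j then
                    -∑ m ∈ Finset.univ.erase j,
                      (a j - a m)⁻¹ • (A j * A m - A m * A j)
                  else (a l - a j)⁻¹ • (A l * A j - A j * A l)))
              - ((if l = j then
                    -∑ m ∈ Finset.univ.erase j,
                      (a j - a m)⁻¹ • (A j * A m - A m * A j)
                  else (a l - a j)⁻¹ • (A l * A j - A j * A l)) * A i
                + A l * ((a i - a j)⁻¹ • (A i * A j - A j * A i))))
          + (if l = j then 1 / (a i - a j) ^ 2 else 0) • (A i * A l - A l * A i))
        = ((a i - a j)⁻¹ * (a j - a l)⁻¹) •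
              (A i * (A j * A l - A l * A j) - (A j * A l - A l * A j) * A i)
          + ((a i - a j)⁻¹ * (a i - a l)⁻¹) •
              ((A i * A l - A l * A i) * A j - A j * (A i * A l - A l * A i)) := by
    intro l hl
    have hlj : l ≠ j := (Finset.mem_erase.mp hl).1
    have hli : l ≠ i := (Finset.mem_erase.mp (Finset.mem_erase.mp hl).2).1
    have h1 : a i - a l ≠ 0 := sub_ne_zero.mpr (hd i l (Ne.symm hli))
    have h2 : a l - a j ≠ 0 := sub_ne_zero.mpr (hd l j hlj)
    have h3 : a j - a l ≠ 0 := sub_ne_zero.mpr (hd j l (Ne.symm hlj))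
    rw [if_neg hlj, if_neg hlj]
    simp only [mul_sub, sub_mul, mul_add, add_mul, mul_neg, neg_mul, smul_sub, smul_add,
      smul_neg, smul_smul, smul_mul_assoc, mul_smul_comm, mul_assoc, zero_smul, add_zero]
    match_scalars <;> (field_simp; try ring)
  have hu : (a i - a j)⁻¹ •
        (A i * (∑ l ∈ (Finset.univ.erase i).erase j,
            (a j - a l)⁻¹ • (A j * A l - A l * A j))
          - (∑ l ∈ (Finset.univ.erase i).erase j,
            (a j - a l)⁻¹ • (A j * A l - A l * A j)) * A i)
      = ∑ l ∈ (Finset.univ.erase i).erase j,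
          ((a i - a j)⁻¹ * (a j - a l)⁻¹) •
            (A i * (A j * A l - A l * A j) - (A j * A l - A l * A j) * A i) := by
    rw [Finset.mul_sum, Finset.sum_mul, ← Finset.sum_sub_distrib, Finset.smul_sum]
    exact Finset.sum_congr rfl fun l _ => by
      rw [mul_smul_comm, smul_mul_assoc, ← smul_sub, smul_smul]
  have hv : (a i - a j)⁻¹ •
        ((∑ l ∈ (Finset.univ.erase i).erase j,
            (a i - a l)⁻¹ • (A i * A l - A l * A i)) * A j
          - A j * (∑ l ∈ (Finset.univ.erase i).erase j,
            (a i - a l)⁻¹ • (A i * A l - A l * A i)))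
      = ∑ l ∈ (Finset.univ.erase i).erase j,
          ((a i - a j)⁻¹ * (a i - a l)⁻¹) •
            ((A i * A l - A l * A i) * A j - A j * (A i * A l - A l * A i)) := by
    rw [Finset.sum_mul, Finset.mul_sum, ← Finset.sum_sub_distrib, Finset.smul_sum]
    exact Finset.sum_congr rfl fun l _ => by
      rw [smul_mul_assoc, mul_smul_comm, ← smul_sub, smul_smul]
  have hDjsplit : (-∑ m ∈ Finset.univ.erase j, (a j - a m)⁻¹ • (A j * A m - A m * A j))
      = -((a j - a i)⁻¹ • (A j * A i - A i * A j)
          + ∑ m ∈ (Finset.univ.erase i).erase j, (a j - a m)⁻¹ • (A j * A m - A m * A j)) := by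
    rw [← Finset.add_sum_erase _ _ himem, Finset.erase_right_comm]
  have hj1 : (if j = j then
        -∑ m ∈ Finset.univ.erase j, (a j - a m)⁻¹ • (A j * A m - A m * A j)
      else (a j - a j)⁻¹ • (A j * A j - A j * A j))
      = -∑ m ∈ Finset.univ.erase j, (a j - a m)⁻¹ • (A j * A m - A m * A j) := if_pos rfl
  have hj2 : (if j = j then 1 / (a i - a j) ^ 2 else (0 : ℂ)) = 1 / (a i - a j) ^ 2 := if_pos rfl
  rw [← Finset.add_sum_erase _ _ hjmem]
  rw [hj1, hj2]
  rw [Finset.sum_congr rfl hpoint, Finset.sum_add_distrib, ← hu, ← hv]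
  rw [hDjsplit]
  rw [← Finset.add_sum_erase _ _ hjmem]
  simp only [neg_add, mul_sub, sub_mul, mul_add, add_mul, mul_neg, neg_mul, smul_sub, smul_add,
    smul_neg, neg_smul, smul_smul, smul_mul_assoc, mul_smul_comm, mul_assoc]
  match_scalars <;> (field_simp; try ring)

/-- Assuming the Schlesinger equations hold on an open domain `D` of points with pairwise
distinct coordinates, the mixed partial derivatives agree: for `j ≠ i`, the derivative in
`t_j` of `−∑_{l ≠ i} [Q_l, Q_i]/(t_i − t_l)` (the Schlesinger right-hand side for
`∂Q_i/∂t_i`) equals the derivative in `t_i` of `[Q_i, Q_j]/(t_i − t_j)` (the Schlesinger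
right-hand side for `∂Q_i/∂t_j`). -/
theorem statement3 {n k : ℕ}
    (D : Set (Fin n → ℂ)) (hD : IsOpen D)
    (hDdist : ∀ t ∈ D, ∀ i j : Fin n, i ≠ j → t i ≠ t j)
    (Q : Fin n → (Fin n → ℂ) → Matrix (Fin k) (Fin k) ℂ)
    (hSch : ∀ t ∈ D, ∀ i j : Fin n, i ≠ j →
      HasDerivAt (fun s => Q i (update t j s))
        ((t i - t j)⁻¹ • (Q i t * Q j t - Q j t * Q i t)) (t j))
    (hSch' : ∀ t ∈ D, ∀ i : Fin n,
      HasDerivAt (fun s => Q i (update t i s))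
        (-∑ l ∈ Finset.univ.erase i,
          (t i - t l)⁻¹ • (Q i t * Q l t - Q l t * Q i t)) (t i))
    (t : Fin n → ℂ) (ht : t ∈ D) (i j : Fin n) (hij : j ≠ i) :
    deriv (fun s =>
        -∑ l ∈ Finset.univ.erase i,
          ((update t j s) i - (update t j s) l)⁻¹ •
            (Q i (update t j s) * Q l (update t j s)
              - Q l (update t j s) * Q i (update t j s))) (t j)
      = deriv (fun r =>
        ((update t i r) i - (update t i r) j)⁻¹ •
          (Q i (update t i r) * Q j (update t i r)
            - Q j (update t i r) * Q i (update t i r))) (t i) := by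
  have hij' : i ≠ j := Ne.symm hij
  have hdij : t i - t j ≠ 0 := sub_ne_zero.mpr (hDdist t ht i j hij')
  -- clean up the `update`s at fixed coordinates
  simp only [Function.update_self, Function.update_of_ne hij, Function.update_of_ne hij']
  -- derivative of Q i in direction j
  have hQi : HasDerivAt (fun s => Q i (update t j s))
      ((t i - t j)⁻¹ • (Q i t * Q j t - Q j t * Q i t)) (t j) := hSch t ht i j hij'
  -- the left-hand side derivative, summand by summand
  have key : ∀ l ∈ Finset.univ.erase i,
      HasDerivAt (fun s => (t i - update t j s l)⁻¹ •
          (Q i (update t j s) * Q l (update t j s)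
            - Q l (update t j s) * Q i (update t j s)))
        ((t i - t l)⁻¹ •
            ((((t i - t j)⁻¹ • (Q i t * Q j t - Q j t * Q i t)) * Q l t
                + Q i t * (if l = j then
                    -∑ m ∈ Finset.univ.erase j,
                      (t j - t m)⁻¹ • (Q j t * Q m t - Q m t * Q j t)
                  else (t l - t j)⁻¹ • (Q l t * Q j t - Q j t * Q l t)))
              - ((if l = j then
                    -∑ m ∈ Finset.univ.erase j,
                      (t j - t m)⁻¹ • (Q j t * Q m t - Q m t * Q j t)
                  else (t l - t j)⁻¹ • (Q l t * Q j t - Q j t * Q l t)) * Q i t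
                + Q l t * ((t i - t j)⁻¹ • (Q i t * Q j t - Q j t * Q i t))))
          + (if l = j then 1 / (t i - t j) ^ 2 else 0) • (Q i t * Q l t - Q l t * Q i t))
        (t j) := by
    intro l hl
    by_cases hlj : l = j
    · subst hlj
      have hQl : HasDerivAt (fun s => Q l (update t l s))
          (-∑ m ∈ Finset.univ.erase l,
            (t l - t m)⁻¹ • (Q l t * Q m t - Q m t * Q l t)) (t l) := hSch' t ht l
      have hc : HasDerivAt (fun s : ℂ => (t i - s)⁻¹) (-(-1) / (t i - t l) ^ 2) (t l) :=
        ((hasDerivAt_id (t l)).const_sub (t i)).inv hdij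
      have H := hc.fun_smul ((hQi.fun_mul hQl).fun_sub (hQl.fun_mul hQi))
      simp only [Function.update_self]
      convert H using 1
      · rfl
      · rfl
      · rfl
      simp [Function.update_eq_self]
    · have hQl : HasDerivAt (fun s => Q l (update t j s))
          ((t l - t j)⁻¹ • (Q l t * Q j t - Q j t * Q l t)) (t j) := hSch t ht l j hlj
      have hc : HasDerivAt (fun _ : ℂ => (t i - t l)⁻¹) 0 (t j) := hasDerivAt_const _ _
      have H := hc.fun_smul ((hQi.fun_mul hQl).fun_sub (hQl.fun_mul hQi))
      simp only [Function.update_of_ne hlj]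
      convert H using 1
      · rfl
      · rfl
      · rfl
      simp [Function.update_eq_self, hlj]
  have hL : HasDerivAt (fun s =>
      -∑ l ∈ Finset.univ.erase i, (t i - update t j s l)⁻¹ •
          (Q i (update t j s) * Q l (update t j s)
            - Q l (update t j s) * Q i (update t j s)))
      (-∑ l ∈ Finset.univ.erase i,
        ((t i - t l)⁻¹ •
            ((((t i - t j)⁻¹ • (Q i t * Q j t - Q j t * Q i t)) * Q l t
                + Q i t * (if l = j then
                    -∑ m ∈ Finset.univ.erase j,
                      (t j - t m)⁻¹ • (Q j t * Q m t - Q m t * Q j t)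
                  else (t l - t j)⁻¹ • (Q l t * Q j t - Q j t * Q l t)))
              - ((if l = j then
                    -∑ m ∈ Finset.univ.erase j,
                      (t j - t m)⁻¹ • (Q j t * Q m t - Q m t * Q j t)
                  else (t l - t j)⁻¹ • (Q l t * Q j t - Q j t * Q l t)) * Q i t
                + Q l t * ((t i - t j)⁻¹ • (Q i t * Q j t - Q j t * Q i t))))
          + (if l = j then 1 / (t i - t j) ^ 2 else 0) • (Q i t * Q l t - Q l t * Q i t)))
      (t j) := (HasDerivAt.fun_sum key).fun_neg
  -- the right-hand side derivative
  have hRi : HasDerivAt (fun r => Q i (update t i r))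
      (-∑ m ∈ Finset.univ.erase i,
        (t i - t m)⁻¹ • (Q i t * Q m t - Q m t * Q i t)) (t i) := hSch' t ht i
  have hRj : HasDerivAt (fun r => Q j (update t i r))
      ((t j - t i)⁻¹ • (Q j t * Q i t - Q i t * Q j t)) (t i) := hSch t ht j i hij
  have hcR : HasDerivAt (fun r : ℂ => (r - t j)⁻¹) (-1 / (t i - t j) ^ 2) (t i) :=
    ((hasDerivAt_id (t i)).sub_const (t j)).inv hdij
  have hR : HasDerivAt (fun r =>
      (r - t j)⁻¹ • (Q i (update t i r) * Q j (update t i r)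
        - Q j (update t i r) * Q i (update t i r)))
      ((t i - t j)⁻¹ •
          (((-∑ m ∈ Finset.univ.erase i,
                (t i - t m)⁻¹ • (Q i t * Q m t - Q m t * Q i t)) * Q j t
              + Q i t * ((t j - t i)⁻¹ • (Q j t * Q i t - Q i t * Q j t)))
            - (((t j - t i)⁻¹ • (Q j t * Q i t - Q i t * Q j t)) * Q i t
              + Q j t * (-∑ m ∈ Finset.univ.erase i,
                  (t i - t m)⁻¹ • (Q i t * Q m t - Q m t * Q i t))))
        + (-1 / (t i - t j) ^ 2) • (Q i t * Q j t - Q j t * Q i t)) (t i) := by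
    convert hcR.fun_smul ((hRi.fun_mul hRj).fun_sub (hRj.fun_mul hRi)) using 1
    · rfl
    · rfl
    · rfl
    simp [Function.update_eq_self]
  erw [hL.deriv, hR.deriv]
  exact schlesinger_algebra t (fun m => Q m t) i j hij (hDdist t ht)
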